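/- For k, i, j ∈ ℕ = {1, 2, 3, …}, set α^{(k)}_{ij} = j^k if i < k and α^{(k)}_{ij} = i^k if i ≥ k. Fix a bijection φ : ℕ × ℕ → ℕ such that φ(i, j) < φ(i, j+1) for all i, j, and define p^{(k)}_n = α^{(k)}_{φ^{-1}(n)}. Let A(P) = { a : ℕ → ℂ : ‖a‖_k := Σ_n |a_n|·p^{(k)}_n < ∞ for every k ∈ ℕ }, endowed with the locally convex topology generated by the norms ‖·‖_k (k ∈ ℕ) and with the product (a*b)_n = a_n·b_n + a_n·(Σ_{m>n} b_m) + b_n·(Σ_{m>n} a_m). Then A(P) is a commutative topological algebra which has a locally bounded approximate identity but does not have a bounded approximate identity. -/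

import Mathlib

open Filter Topology

/-- The Köthe–Grothendieck matrix: `α^{(k)}_{ij} = j^k` if `i < k`, and `i^k` if `i ≥ k`
(indices in `ℕ+ = {1, 2, 3, …}`). -/
noncomputable def kgMatrix (k i j : ℕ+) : ℝ :=
  if i < k then ((j : ℕ) : ℝ) ^ (k : ℕ) else ((i : ℕ) : ℝ) ^ (k : ℕ)

/-- The weights `p^{(k)}_n = α^{(k)}_{φ⁻¹(n)}`. -/
noncomputable def kgWeight (φ : ℕ+ × ℕ+ ≃ ℕ+) (k n : ℕ+) : ℝ :=
  kgMatrix k (φ.symm n).1 (φ.symm n).2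

/-- Membership in the Köthe space `A(P)`. -/
def memKG (φ : ℕ+ × ℕ+ ≃ ℕ+) (a : ℕ+ → ℂ) : Prop :=
  ∀ k : ℕ+, Summable fun n => ‖a n‖ * kgWeight φ k n

/-- The norm `‖a‖_k = Σ_n |a_n| p^{(k)}_n` on `A(P)`. -/
noncomputable def kgNorm (φ : ℕ+ × ℕ+ ≃ ℕ+) (k : ℕ+) (a : ℕ+ → ℂ) : ℝ :=
  ∑' n, ‖a n‖ * kgWeight φ k n

/-- The sum of the tail `Σ_{j > k} a j`. -/
noncomputable def tailSum (a : ℕ+ → ℂ) (k : ℕ+) : ℂ :=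
  ∑' j : ℕ+, if k < j then a j else 0

/-- The product `(a*b)_n = a_n b_n + a_n (Σ_{m>n} b_m) + b_n (Σ_{m>n} a_m)`,
the unique continuous bilinear extension of `e_i * e_j = e_{min i j}`. -/
noncomputable def kmul (a b : ℕ+ → ℂ) : ℕ+ → ℂ :=
  fun n => a n * b n + a n * tailSum b n + b n * tailSum a n

/-!
With `A n = ‖a n‖ p_n`, `B n = ‖b n‖ p_n` and `p ≥ 1`, the product satisfies
`‖(a*b)_n‖ p_n ≤ A n * ∑_{m ≥ n} B m + B n * ∑_{m > n} A m`, and the right-hand side sums to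
`(∑ A) (∑ B)` because the pairs `(n, m)` split into `n ≤ m` and `m < n`; hence every `‖·‖_k` is
submultiplicative.

For a unit vector `e_N` one has `a - a * e_N = -(∑_{m > N} a_m) e_N + a·𝟙_{(N, ∞)}`, so
`‖a - a * e_N‖_k ≤ (p^{(k)}_N + 1) ∑_{m > N} |a_m| p^{(k)}_m`. Taking `N = φ(k, N₀)` in the `k`-th
row, where the weight is the constant `k^k`, gives a locally bounded approximate identity.

If `(e_α)` were a bounded approximate identity, the `N`-th coordinate `∑_{m ≥ N} e_α(m)` of
`e_N * e_α` would tend to `1`. But boundedness in `‖·‖₂` (weight `i²` on row `i ≥ 2`) makes the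
rows `i > I` uniformly small, and boundedness in `‖·‖_{i+1}` (weight `j^{i+1}` on row `i`) makes the
parts `j > J` of the finitely many rows `i ≤ I` uniformly small; so for `N` beyond `φ(i, J)`,
`i ≤ I`, these sums stay below `1/2` for every `α`.
-/

open Set

section OrderedSums

variable {ι : Type*} [LinearOrder ι]

theorem Summable.tsum_indicator_Ici {E : Type*} [NormedAddCommGroup E] [CompleteSpace E]
    {f : ι → E} (hf : Summable f) (N : ι) :
    ∑' m, (Ici N).indicator f m = f N + ∑' m, (Ioi N).indicator f m := by
  classical
  rw [← tsum_pi_single N (f N), ← Summable.tsum_add (hasSum_pi_single N (f N)).summable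
    (hf.indicator _)]
  congr 1; ext m
  rcases eq_or_ne m N with rfl | h
  · simp
  · simp [indicator_apply, h, h.symm.le_iff_lt]

theorem tendsto_tsum_indicator_Ioi_atTop {E : Type*} [NormedAddCommGroup E]
    [LocallyFiniteOrderBot ι] (f : ι → E) :
    Tendsto (fun N => ∑' m, (Ioi N).indicator f m) atTop (𝓝 0) := by
  refine ((tendsto_tsum_compl_atTop_zero f).comp tendsto_finset_Iic_atTop_atTop).congr fun N => ?_
  rw [Function.comp_apply, ← tsum_subtype]
  exact tsum_congr_set_coe f (by ext; simp; rfl)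

theorem tsum_mul_tsum_indicator_Ici_add_tsum_mul_tsum_indicator_Ioi {A B : ι → ℝ}
    (hA : Summable A) (hB : Summable B) (hA0 : 0 ≤ A) (hB0 : 0 ≤ B) :
    ∑' n, A n * ∑' m, (Ici n).indicator B m + ∑' n, B n * ∑' m, (Ioi n).indicator A m =
      (∑' n, A n) * ∑' n, B n := by
  set f : ι × ι → ℝ := fun p => A p.1 * B p.2
  have hf : Summable f := hA.mul_of_nonneg hB hA0 hB0
  set S : Set (ι × ι) := {p | p.1 ≤ p.2}
  have hS : ∑' n, A n * ∑' m, (Ici n).indicator B m = ∑' p, S.indicator f p := by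
    rw [(hf.indicator S).tsum_prod' (hf.indicator S).prod_factor]
    refine tsum_congr fun n => ?_
    rw [← tsum_mul_left]
    refine tsum_congr fun m => ?_
    by_cases h : n ≤ m <;> simp [S, f, h]
  have hSc : ∑' n, B n * ∑' m, (Ioi n).indicator A m = ∑' p, Sᶜ.indicator f p := by
    have hfc : Summable fun p => Sᶜ.indicator f (Equiv.prodComm ι ι p) :=
      (Equiv.prodComm ι ι).summable_iff.2 (hf.indicator Sᶜ)
    rw [← (Equiv.prodComm ι ι).tsum_eq, hfc.tsum_prod' hfc.prod_factor]
    refine tsum_congr fun n => ?_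
    rw [← tsum_mul_left]
    refine tsum_congr fun m => ?_
    by_cases h : n < m <;> simp [S, f, h, mul_comm]
  rw [hS, hSc, ← (hf.indicator S).tsum_add (hf.indicator Sᶜ)]
  simp_rw [← Pi.add_apply (S.indicator f), indicator_self_add_compl]
  exact (hA.tsum_mul_tsum hB hf).symm

end OrderedSums

theorem norm_tsum_indicator_le {ι E : Type*} [NormedAddCommGroup E] {a : ι → E} {w : ι → ℝ}
    (hw : ∀ n, 1 ≤ w n) (ha : Summable fun n => ‖a n‖ * w n) (s : Set ι) :
    ‖∑' m, s.indicator a m‖ ≤ ∑' m, s.indicator (fun n => ‖a n‖ * w n) m := by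
  have hle : ∀ n, ‖a n‖ ≤ ‖a n‖ * w n := fun n => le_mul_of_one_le_right (norm_nonneg _) (hw n)
  have hsum : Summable fun n => ‖a n‖ :=
    ha.of_nonneg_of_le (fun n => norm_nonneg _) hle
  refine (norm_tsum_le_tsum_norm ?_).trans ?_
  · simpa [norm_indicator_eq_indicator_norm] using hsum.indicator s
  · simp_rw [norm_indicator_eq_indicator_norm]
    exact (hsum.indicator s).tsum_le_tsum (fun n => indicator_le_indicator (hle n))
      (ha.indicator s)

theorem summable_mul_tsum_indicator {ι : Type*} {A B : ι → ℝ} (hA : Summable A) (hB : Summable B)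
    (hA0 : 0 ≤ A) (hB0 : 0 ≤ B) (s : ι → Set ι) :
    Summable fun n => A n * ∑' m, (s n).indicator B m :=
  (hA.mul_right (∑' m, B m)).of_nonneg_of_le
    (fun n => mul_nonneg (hA0 n) (tsum_nonneg fun m => indicator_nonneg (fun m _ => hB0 m) m))
    (fun n => mul_le_mul_of_nonneg_left
      ((hB.indicator _).tsum_le_tsum (indicator_le_self' fun m _ => hB0 m) hB) (hA0 n))

theorem tailSum_eq_tsum_indicator (a : ℕ+ → ℂ) (N : ℕ+) :
    tailSum a N = ∑' m, (Ioi N).indicator a m := by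
  simp [tailSum, indicator_apply]

theorem add_tailSum_eq_tsum_indicator {a : ℕ+ → ℂ} (ha : Summable a) (N : ℕ+) :
    a N + tailSum a N = ∑' m, (Ici N).indicator a m := by
  rw [ha.tsum_indicator_Ici, tailSum_eq_tsum_indicator]

theorem kmul_comm (a b : ℕ+ → ℂ) : kmul a b = kmul b a := by
  ext n; simp only [kmul]; ring

section WeightedProduct

variable {w : ℕ+ → ℝ} {a b : ℕ+ → ℂ}

theorem norm_kmul_mul_le (hw : ∀ n, 1 ≤ w n) (ha : Summable fun n => ‖a n‖ * w n)
    (hb : Summable fun n => ‖b n‖ * w n) (n : ℕ+) :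
    ‖kmul a b n‖ * w n ≤
      ‖a n‖ * w n * ∑' m, (Ici n).indicator (fun m => ‖b m‖ * w m) m +
        ‖b n‖ * w n * ∑' m, (Ioi n).indicator (fun m => ‖a m‖ * w m) m := by
  have hb' : Summable b :=
    .of_norm_bounded hb fun m => le_mul_of_one_le_right (norm_nonneg _) (hw m)
  have hkmul : kmul a b n = a n * (b n + tailSum b n) + b n * tailSum a n := by
    simp only [kmul]; ring
  have hw0 : 0 ≤ w n := zero_le_one.trans (hw n)
  calc ‖kmul a b n‖ * w n ≤ (‖a n‖ * ‖b n + tailSum b n‖ + ‖b n‖ * ‖tailSum a n‖) * w n := by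
        rw [hkmul, ← norm_mul, ← norm_mul]
        exact mul_le_mul_of_nonneg_right (norm_add_le _ _) hw0
    _ = ‖a n‖ * w n * ‖b n + tailSum b n‖ + ‖b n‖ * w n * ‖tailSum a n‖ := by ring
    _ ≤ _ := by
      rw [add_tailSum_eq_tsum_indicator hb', tailSum_eq_tsum_indicator]
      gcongr
      · exact norm_tsum_indicator_le hw hb _
      · exact norm_tsum_indicator_le hw ha _

theorem summable_norm_kmul_mul (hw : ∀ n, 1 ≤ w n) (ha : Summable fun n => ‖a n‖ * w n)
    (hb : Summable fun n => ‖b n‖ * w n) : Summable fun n => ‖kmul a b n‖ * w n := by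
  have hw0 (c : ℕ+ → ℂ) : 0 ≤ fun n => ‖c n‖ * w n :=
    fun n => mul_nonneg (norm_nonneg _) (zero_le_one.trans (hw n))
  exact .of_nonneg_of_le (hw0 (kmul a b)) (norm_kmul_mul_le hw ha hb)
    ((summable_mul_tsum_indicator ha hb (hw0 a) (hw0 b) _).add
      (summable_mul_tsum_indicator hb ha (hw0 b) (hw0 a) _))

theorem tsum_norm_kmul_mul_le (hw : ∀ n, 1 ≤ w n) (ha : Summable fun n => ‖a n‖ * w n)
    (hb : Summable fun n => ‖b n‖ * w n) :
    ∑' n, ‖kmul a b n‖ * w n ≤ (∑' n, ‖a n‖ * w n) * ∑' n, ‖b n‖ * w n := by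
  have hA0 : 0 ≤ fun n => ‖a n‖ * w n :=
    fun n => mul_nonneg (norm_nonneg _) (zero_le_one.trans (hw n))
  have hB0 : 0 ≤ fun n => ‖b n‖ * w n :=
    fun n => mul_nonneg (norm_nonneg _) (zero_le_one.trans (hw n))
  rw [← tsum_mul_tsum_indicator_Ici_add_tsum_mul_tsum_indicator_Ioi ha hb hA0 hB0,
    ← Summable.tsum_add (summable_mul_tsum_indicator ha hb hA0 hB0 _)
      (summable_mul_tsum_indicator hb ha hB0 hA0 _)]
  exact (summable_norm_kmul_mul hw ha hb).tsum_le_tsum (norm_kmul_mul_le hw ha hb)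
    ((summable_mul_tsum_indicator ha hb hA0 hB0 _).add
      (summable_mul_tsum_indicator hb ha hB0 hA0 _))

end WeightedProduct

section KotheSpace

variable {φ : ℕ+ × ℕ+ ≃ ℕ+} {a b : ℕ+ → ℂ}

theorem one_le_kgWeight (φ : ℕ+ × ℕ+ ≃ ℕ+) (k n : ℕ+) : 1 ≤ kgWeight φ k n := by
  unfold kgWeight kgMatrix
  split <;> exact one_le_pow₀ (Nat.one_le_cast.2 (PNat.pos _))

theorem kgWeight_nonneg (φ : ℕ+ × ℕ+ ≃ ℕ+) (k n : ℕ+) : 0 ≤ kgWeight φ k n :=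
  zero_le_one.trans (one_le_kgWeight φ k n)

theorem kgWeight_apply (φ : ℕ+ × ℕ+ ≃ ℕ+) (k i j : ℕ+) :
    kgWeight φ k (φ (i, j)) = kgMatrix k i j := by
  simp [kgWeight]

theorem kgWeight_diag (φ : ℕ+ × ℕ+ ≃ ℕ+) (k j : ℕ+) :
    kgWeight φ k (φ (k, j)) = ((k : ℕ) : ℝ) ^ (k : ℕ) := by
  simp [kgWeight_apply, kgMatrix]

theorem memKG.summable_norm (ha : memKG φ a) : Summable fun n => ‖a n‖ :=
  (ha 1).of_nonneg_of_le (fun _ => norm_nonneg _)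
    (fun n => le_mul_of_one_le_right (norm_nonneg _) (one_le_kgWeight φ 1 n))

theorem norm_le_kgNorm (ha : memKG φ a) (k n : ℕ+) : ‖a n‖ ≤ kgNorm φ k a :=
  (le_mul_of_one_le_right (norm_nonneg _) (one_le_kgWeight φ k n)).trans
    ((ha k).le_tsum n fun m _ => mul_nonneg (norm_nonneg _) (kgWeight_nonneg φ k m))

theorem memKG_kmul (ha : memKG φ a) (hb : memKG φ b) : memKG φ (kmul a b) :=
  fun k => summable_norm_kmul_mul (one_le_kgWeight φ k) (ha k) (hb k)

theorem kgNorm_kmul_le (ha : memKG φ a) (hb : memKG φ b) (k : ℕ+) :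
    kgNorm φ k (kmul a b) ≤ kgNorm φ k a * kgNorm φ k b :=
  tsum_norm_kmul_mul_le (one_le_kgWeight φ k) (ha k) (hb k)

theorem norm_add_mul_kgWeight_le (a b : ℕ+ → ℂ) (k n : ℕ+) :
    ‖(a + b) n‖ * kgWeight φ k n ≤ ‖a n‖ * kgWeight φ k n + ‖b n‖ * kgWeight φ k n := by
  rw [← add_mul]
  exact mul_le_mul_of_nonneg_right (norm_add_le _ _) (kgWeight_nonneg φ k n)

theorem memKG.add (ha : memKG φ a) (hb : memKG φ b) : memKG φ (a + b) := fun k =>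
  ((ha k).add (hb k)).of_nonneg_of_le
    (fun n => mul_nonneg (norm_nonneg _) (kgWeight_nonneg φ k n)) (norm_add_mul_kgWeight_le a b k)

theorem memKG.neg (ha : memKG φ a) : memKG φ (-a) := by
  simpa [memKG] using ha

theorem memKG.sub (ha : memKG φ a) (hb : memKG φ b) : memKG φ (a - b) := by
  simpa [sub_eq_add_neg] using ha.add hb.neg

theorem kgNorm_add_le (ha : memKG φ a) (hb : memKG φ b) (k : ℕ+) :
    kgNorm φ k (a + b) ≤ kgNorm φ k a + kgNorm φ k b := by
  rw [kgNorm, kgNorm, kgNorm, ← (ha k).tsum_add (hb k)]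
  exact (ha.add hb k).tsum_le_tsum (norm_add_mul_kgWeight_le a b k) ((ha k).add (hb k))

theorem memKG_single (φ : ℕ+ × ℕ+ ≃ ℕ+) (N : ℕ+) (c : ℂ) : memKG φ (Pi.single N c) := fun k =>
  summable_of_ne_finset_zero (s := {N}) fun n hn => by
    simp [Finset.notMem_singleton.1 hn]

theorem memKG.indicator (ha : memKG φ a) (s : Set ℕ+) : memKG φ (s.indicator a) := fun k =>
  ((ha k).indicator s).congr fun n => by simp [norm_indicator_eq_indicator_norm, indicator_mul_left]

theorem kgNorm_single (φ : ℕ+ × ℕ+ ≃ ℕ+) (k N : ℕ+) (c : ℂ) :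
    kgNorm φ k (Pi.single N c) = ‖c‖ * kgWeight φ k N := by
  rw [kgNorm, tsum_eq_single N fun n hn => by simp [hn]]
  simp

theorem kgNorm_indicator (k : ℕ+) (s : Set ℕ+) (a : ℕ+ → ℂ) :
    kgNorm φ k (s.indicator a) = ∑' n, s.indicator (fun n => ‖a n‖ * kgWeight φ k n) n := by
  simp [kgNorm, norm_indicator_eq_indicator_norm, indicator_mul_left]

end KotheSpace

section ApproxIdentity

variable {φ : ℕ+ × ℕ+ ≃ ℕ+} {a : ℕ+ → ℂ}

theorem tailSum_single (N : ℕ+) (c : ℂ) (n : ℕ+) :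
    tailSum (Pi.single N c) n = if n < N then c else 0 := by
  rw [tailSum, tsum_eq_single N fun m hm => by simp [hm]]
  simp

theorem sub_kmul_single (a : ℕ+ → ℂ) (N : ℕ+) :
    a - kmul a (Pi.single N 1) = Pi.single N (-tailSum a N) + (Ioi N).indicator a := by
  ext n
  rcases lt_trichotomy n N with h | rfl | h
  · simp [kmul, tailSum_single, h, h.ne, h.not_gt]
  · simp [kmul, tailSum_single]
  · simp [kmul, tailSum_single, h, h.ne', h.not_gt]

theorem kgNorm_sub_kmul_single_le (ha : memKG φ a) (k N : ℕ+) :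
    kgNorm φ k (a - kmul a (Pi.single N 1)) ≤
      (kgWeight φ k N + 1) * ∑' n, (Ioi N).indicator (fun n => ‖a n‖ * kgWeight φ k n) n := by
  have htail : ‖tailSum a N‖ ≤ ∑' n, (Ioi N).indicator (fun n => ‖a n‖ * kgWeight φ k n) n := by
    rw [tailSum_eq_tsum_indicator]
    exact norm_tsum_indicator_le (one_le_kgWeight φ k) (ha k) _
  rw [sub_kmul_single]
  refine (kgNorm_add_le (memKG_single φ N _) (ha.indicator _) k).trans ?_
  rw [kgNorm_single, kgNorm_indicator, norm_neg]
  nlinarith [kgWeight_nonneg φ k N, norm_nonneg (tailSum a N)]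

theorem exists_local_approxIdentity (hφ : ∀ i j : ℕ+, φ (i, j) < φ (i, j + 1)) (k : ℕ+) {ε : ℝ}
    (hε : 0 < ε) : ∃ C : ℝ, 0 < C ∧
      ∀ F : Finset (ℕ+ → ℂ), (∀ a ∈ F, memKG φ a) →
        ∃ b : ℕ+ → ℂ, memKG φ b ∧ kgNorm φ k b < C * ε ∧
          ∀ a ∈ F, kgNorm φ k (a - kmul a b) < ε ∧ kgNorm φ k (a - kmul b a) < ε := by
  set K : ℝ := ((k : ℕ) : ℝ) ^ (k : ℕ)
  refine ⟨(K + 1) / ε, by positivity, fun F hF => ?_⟩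
  have htail : ∀ᶠ N in atTop, ∀ a ∈ F,
      (K + 1) * ∑' n, (Ioi N).indicator (fun n => ‖a n‖ * kgWeight φ k n) n < ε :=
    (eventually_all_finset F).2 fun a _ => ((tendsto_tsum_indicator_Ioi_atTop _).const_mul _
      |>.eventually_lt_const (by simpa using hε))
  obtain ⟨N₀, hN₀⟩ := htail.exists_forall_of_atTop
  set N := φ (k, N₀)
  have hN : N₀ ≤ N := (strictMono_of_lt_add_one fun j _ => hφ k j).le_apply
  refine ⟨Pi.single N 1, memKG_single φ N 1, ?_, fun a ha => ?_⟩
  · rw [kgNorm_single, norm_one, one_mul, kgWeight_diag, div_mul_cancel₀ _ hε.ne']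
    exact lt_add_one K
  · have h := (kgNorm_sub_kmul_single_le (hF a ha) k N).trans_lt
      (by rw [kgWeight_diag]; exact hN₀ N hN a ha)
    exact ⟨h, by rwa [kmul_comm]⟩

end ApproxIdentity

section NoBoundedApproxIdentity

variable {φ : ℕ+ × ℕ+ ≃ ℕ+} {a : ℕ+ → ℂ}

theorem tsum_le_kgNorm_div_of_mul_le_kgMatrix (ha : memKG φ a) {k i : ℕ+} {c : ℝ} (hc : 0 < c)
    {f : ℕ+ → ℝ} (hf0 : 0 ≤ f) (hf : ∀ j, c * f j ≤ ‖a (φ (i, j))‖ * kgMatrix k i j) :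
    ∑' j, f j ≤ kgNorm φ k a / c := by
  have hrow_inj : Function.Injective fun j => φ (i, j) :=
    φ.injective.comp (Prod.mk_right_injective i)
  have hrow : Summable fun j => ‖a (φ (i, j))‖ * kgMatrix k i j := by
    simpa [Function.comp_def, kgWeight_apply] using (ha k).comp_injective hrow_inj
  have hrow_le : ∑' j, ‖a (φ (i, j))‖ * kgMatrix k i j ≤ kgNorm φ k a := by
    simpa [Function.comp_def, kgWeight_apply, kgNorm] using tsum_comp_le_tsum_of_inj (ha k)
      (fun n => mul_nonneg (norm_nonneg _) (kgWeight_nonneg φ k n)) hrow_inj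
  rw [le_div_iff₀' hc, ← tsum_mul_left]
  exact (hrow.of_nonneg_of_le (fun j => mul_nonneg hc.le (hf0 j)) hf |>.tsum_le_tsum hf hrow).trans
    hrow_le

theorem tsum_row_indicator_Ici_le_of_le (ha : memKG φ a) {k i : ℕ+} (hki : k ≤ i) (N : ℕ+) :
    ∑' j, (Ici N).indicator (fun m => ‖a m‖) (φ (i, j)) ≤
      kgNorm φ k a / ((i : ℕ) : ℝ) ^ (k : ℕ) := by
  refine tsum_le_kgNorm_div_of_mul_le_kgMatrix (i := i) ha (by positivity)
    (fun j => indicator_nonneg (fun _ _ => norm_nonneg _) _) fun j => ?_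
  rw [kgMatrix, if_neg hki.not_gt, mul_comm]
  gcongr
  exact indicator_le_self' (fun _ _ => norm_nonneg _) _

theorem tsum_row_indicator_Ici_le_of_lt (hφ : ∀ i j : ℕ+, φ (i, j) < φ (i, j + 1)) (ha : memKG φ a)
    {k i J N : ℕ+} (hik : i < k) (hN : φ (i, J) < N) :
    ∑' j, (Ici N).indicator (fun m => ‖a m‖) (φ (i, j)) ≤ kgNorm φ k a / ((J : ℕ) : ℝ) := by
  refine tsum_le_kgNorm_div_of_mul_le_kgMatrix (i := i) ha (by positivity)
    (fun j => indicator_nonneg (fun _ _ => norm_nonneg _) _) fun j => ?_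
  rw [kgMatrix, if_pos hik]
  by_cases hj : N ≤ φ (i, j)
  · have hJj : J < j := (strictMono_of_lt_add_one fun j _ => hφ i j).lt_iff_lt.1 (hN.trans_le hj)
    have hj1 : (1 : ℝ) ≤ ((j : ℕ) : ℝ) := Nat.one_le_cast.2 j.pos
    rw [indicator_of_mem (mem_Ici.2 hj), mul_comm]
    gcongr
    calc ((J : ℕ) : ℝ) ≤ ((j : ℕ) : ℝ) := by exact_mod_cast hJj.le
      _ ≤ ((j : ℕ) : ℝ) ^ (k : ℕ) := le_self_pow₀ hj1 k.ne_zero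
  · rw [indicator_of_notMem (fun h => hj (mem_Ici.1 h)), mul_zero]
    positivity

theorem exists_tsum_indicator_Ici_lt_of_kgNorm_le (hφ : ∀ i j : ℕ+, φ (i, j) < φ (i, j + 1))
    (M : ℕ+ → ℝ) {ε : ℝ} (hε : 0 < ε) : ∃ N : ℕ+, ∀ a, memKG φ a → (∀ k, kgNorm φ k a ≤ M k) →
      ∑' m, (Ici N).indicator (fun m => ‖a m‖) m < ε := by
  set g : ℕ+ → ℝ := fun i => M 2 / ((i : ℕ) : ℝ) ^ 2
  have hg : Summable g :=
    (((Real.summable_one_div_nat_pow.2 one_lt_two).mul_left (M 2)).comp_injective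
      PNat.coe_injective).congr fun i => by simp [g, div_eq_mul_inv]
  obtain ⟨I, hI⟩ :=
    ((tendsto_tsum_indicator_Ioi_atTop g).eventually_lt_const (half_pos hε)).exists
  set S := ∑ i ∈ Finset.Iic I, M (i + 1)
  obtain ⟨n, hn⟩ := exists_nat_gt (2 * S / ε)
  set J := n.succPNat
  have hJ : S / ((J : ℕ) : ℝ) < ε / 2 := by
    have hJpos : (0 : ℝ) < ((J : ℕ) : ℝ) := by positivity
    have : (n : ℝ) < ((J : ℕ) : ℝ) := by simp [J]
    rw [div_lt_iff₀ hJpos]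
    rw [div_lt_iff₀ hε] at hn
    nlinarith
  set N := (Finset.Iic I).sup (fun i => φ (i, J)) + 1
  refine ⟨N, fun a ha hM => ?_⟩
  set r : ℕ+ → ℝ := (Iic I).indicator (fun i => M (i + 1) / ((J : ℕ) : ℝ)) + (Ioi I).indicator g
  have hrow : ∀ i, ∑' j, (Ici N).indicator (fun m => ‖a m‖) (φ (i, j)) ≤ r i := by
    intro i
    rcases le_or_gt i I with hi | hi
    · have hN : φ (i, J) < N :=
        PNat.lt_add_one_iff.2 (Finset.le_sup (f := fun i => φ (i, J)) (Finset.mem_Iic.2 hi))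
      simpa [r, hi, hi.not_gt] using
        (tsum_row_indicator_Ici_le_of_lt hφ ha (PNat.lt_add_one_iff.2 le_rfl) hN).trans
          (div_le_div_of_nonneg_right (hM (i + 1)) (by positivity))
    · have h2i : (2 : ℕ+) ≤ i := PNat.add_one_le_iff.2 (one_le.trans_lt hi)
      simpa [r, g, hi, hi.not_ge] using (tsum_row_indicator_Ici_le_of_le ha h2i N).trans
        (div_le_div_of_nonneg_right (hM 2) (by positivity))
  have hfin :
      ∑' i, (Iic I).indicator (fun i => M (i + 1) / ((J : ℕ) : ℝ)) i = S / ((J : ℕ) : ℝ) := by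
    rw [tsum_eq_sum (s := Finset.Iic I) fun i hi => indicator_of_notMem (by simpa using hi) _,
      Finset.sum_div]
    exact Finset.sum_congr rfl fun i hi => indicator_of_mem (by simpa using hi) _
  have hfin_summable : Summable ((Iic I).indicator fun i => M (i + 1) / ((J : ℕ) : ℝ)) :=
    summable_of_ne_finset_zero (s := Finset.Iic I) fun i hi =>
      indicator_of_notMem (by simpa using hi) _
  have hr : Summable r := hfin_summable.add (hg.indicator _)
  have hnorm : Summable fun p : ℕ+ × ℕ+ => (Ici N).indicator (fun m => ‖a m‖) (φ p) :=
    φ.summable_iff.2 (ha.summable_norm.indicator _)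
  calc ∑' m, (Ici N).indicator (fun m => ‖a m‖) m
      = ∑' i, ∑' j, (Ici N).indicator (fun m => ‖a m‖) (φ (i, j)) := by
        rw [← φ.tsum_eq, hnorm.tsum_prod' hnorm.prod_factor]
    _ ≤ ∑' i, r i := by
        refine (hr.of_nonneg_of_le (fun i => tsum_nonneg fun j => ?_) hrow).tsum_le_tsum hrow hr
        exact indicator_nonneg (fun _ _ => norm_nonneg _) _
    _ = S / ((J : ℕ) : ℝ) + ∑' i, (Ioi I).indicator g i := by
        rw [← hfin, ← hfin_summable.tsum_add (hg.indicator _)]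
        rfl
    _ < ε := by linarith

theorem not_exists_boundedApproxIdentity (hφ : ∀ i j : ℕ+, φ (i, j) < φ (i, j + 1)) :
    ¬ ∃ (ι : Type) (_ : Preorder ι) (_ : IsDirected ι (· ≤ ·)) (_ : Nonempty ι)
        (e : ι → ℕ+ → ℂ), (∀ i, memKG φ (e i)) ∧
        (∀ k : ℕ+, ∃ M : ℝ, ∀ i, kgNorm φ k (e i) ≤ M) ∧
        (∀ a : ℕ+ → ℂ, memKG φ a → ∀ k : ℕ+,
          Tendsto (fun i => kgNorm φ k (kmul a (e i) - a)) atTop (𝓝 (0 : ℝ))) ∧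
        (∀ a : ℕ+ → ℂ, memKG φ a → ∀ k : ℕ+,
          Tendsto (fun i => kgNorm φ k (kmul (e i) a - a)) atTop (𝓝 (0 : ℝ))) := by
  rintro ⟨ι, _, _, _, e, he, hbdd, hright, -⟩
  choose M hM using hbdd
  obtain ⟨N, hN⟩ := exists_tsum_indicator_Ici_lt_of_kgNorm_le hφ M one_half_pos
  set δ : ℕ+ → ℂ := Pi.single N 1
  obtain ⟨i, hi⟩ :=
    ((hright δ (memKG_single φ N 1) 1).eventually_lt_const one_half_pos).exists
  have hcoord : (kmul δ (e i) - δ) N = (e i N + tailSum (e i) N) - 1 := by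
    simp [δ, kmul, tailSum_single]
  have hnear : ‖(e i N + tailSum (e i) N) - 1‖ < 1 / 2 :=
    hcoord ▸ (norm_le_kgNorm ((memKG_kmul (memKG_single φ N 1) (he i)).sub
      (memKG_single φ N 1)) 1 N).trans_lt hi
  have hsmall : ‖e i N + tailSum (e i) N‖ < 1 / 2 := by
    have hs := (he i).summable_norm
    rw [add_tailSum_eq_tsum_indicator hs.of_norm]
    refine (norm_tsum_le_tsum_norm ?_).trans_lt ?_ <;>
      simp_rw [norm_indicator_eq_indicator_norm]
    · exact hs.indicator _
    · exact hN (e i) (he i) (hM · i)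
  have := norm_sub_norm_le (1 : ℂ) (e i N + tailSum (e i) N)
  rw [norm_one, norm_sub_rev] at this
  linarith

end NoBoundedApproxIdentity

/-- The Köthe–Grothendieck algebra `A(P)` is a commutative topological
algebra (each norm `‖·‖_k` is submultiplicative, so convergence and boundedness in its
topology mean convergence and boundedness with respect to every `‖·‖_k`) which has a
(two-sided) locally bounded approximate identity but no (two-sided) bounded approximate
identity. -/
theorem stmt_16 (φ : ℕ+ × ℕ+ ≃ ℕ+) (hφ : ∀ i j : ℕ+, φ (i, j) < φ (i, j + 1)) :
    -- `A(P)` is a commutative algebra, with each norm submultiplicative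
    (∀ a b : ℕ+ → ℂ, kmul a b = kmul b a) ∧
    (∀ a b : ℕ+ → ℂ, memKG φ a → memKG φ b → memKG φ (kmul a b)) ∧
    (∀ (k : ℕ+) (a b : ℕ+ → ℂ), memKG φ a → memKG φ b →
      kgNorm φ k (kmul a b) ≤ kgNorm φ k a * kgNorm φ k b) ∧
    -- `A(P)` has a (two-sided) locally bounded approximate identity
    (∀ (k : ℕ+) (ε : ℝ), 0 < ε → ∃ C : ℝ, 0 < C ∧
      ∀ F : Finset (ℕ+ → ℂ), (∀ a ∈ F, memKG φ a) →
        ∃ b : ℕ+ → ℂ, memKG φ b ∧ kgNorm φ k b < C * ε ∧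
          ∀ a ∈ F, kgNorm φ k (a - kmul a b) < ε ∧ kgNorm φ k (a - kmul b a) < ε) ∧
    -- `A(P)` has no (two-sided) bounded approximate identity
    ¬ ∃ (ι : Type) (_ : Preorder ι) (_ : IsDirected ι (· ≤ ·)) (_ : Nonempty ι)
        (e : ι → ℕ+ → ℂ), (∀ i, memKG φ (e i)) ∧
        (∀ k : ℕ+, ∃ M : ℝ, ∀ i, kgNorm φ k (e i) ≤ M) ∧
        (∀ a : ℕ+ → ℂ, memKG φ a → ∀ k : ℕ+,
          Tendsto (fun i => kgNorm φ k (kmul a (e i) - a)) atTop (𝓝 (0 : ℝ))) ∧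
        (∀ a : ℕ+ → ℂ, memKG φ a → ∀ k : ℕ+,
          Tendsto (fun i => kgNorm φ k (kmul (e i) a - a)) atTop (𝓝 (0 : ℝ))) :=
  ⟨kmul_comm, fun _ _ => memKG_kmul, fun k _ _ ha hb => kgNorm_kmul_le ha hb k,
    fun k _ hε => exists_local_approxIdentity hφ k hε, not_exists_boundedApproxIdentity hφ⟩
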